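/- Let X = (X_t)_{t≤T} be a nonnegative càdlàg submartingale with deterministic initial value X_0 = X₀ ≥ 0 a.s. Then, with values in [0, ∞], E[X̄_T] ≤ X₀ + ∫_{X₀}^{∞} E[λ(m)] dm ≤ (e/(e−1)) · ( E[X_T log X_T] + V(1 ∨ X₀) ), where λ(m) := 1 for m < 1 and λ(m) := (X_T − m/e)⁺ / (m − m/e) for m ≥ 1. -/

import Mathlib

open MeasureTheory ProbabilityTheory Set Filter
open scoped ENNReal NNReal Classical

noncomputable section

/-- Running maximum of a path over the time interval `[0, t]`. -/
def runMax (f : ℝ → ℝ) (t : ℝ) : ℝ := sSup (f '' Set.Icc 0 t)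

/-- A real function is càdlàg: right-continuous with left limits. -/
def IsCadlag (f : ℝ → ℝ) : Prop :=
  (∀ t, ContinuousWithinAt f (Set.Ici t) t) ∧
  (∀ t, ∃ l : ℝ, Filter.Tendsto f (nhdsWithin t (Set.Iio t)) (nhds l))

/-- `V(x) = x - x log x` (with `log 0 = 0` in Mathlib, so `V 0 = 0`). -/
def Vfun (x : ℝ) : ℝ := x - x * Real.log x

/-- The upper bound `UB(X, id, ζ̲_{1/e}) = X₀ + ∫_{X₀}^∞ E[λ(m)] dm` of Doob's `L¹`
inequality, as a value in `[0,∞]`: here `λ(m) = 1` for `m < 1` and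
`λ(m) = (X_T - m/e)⁺/(m - m/e)` for `m ≥ 1`. -/
def doobL1UB {Ω : Type} [m0 : MeasurableSpace Ω] (μ : Measure Ω)
    (X : ℝ → Ω → ℝ) (T x₀ : ℝ) : ℝ≥0∞ :=
  ENNReal.ofReal x₀ +
    ∫⁻ m in Set.Ioi x₀,
      (if m < 1 then 1
       else ENNReal.ofReal (1 / (m - m / Real.exp 1))
              * ∫⁻ ω, ENNReal.ofReal (X T ω - m / Real.exp 1) ∂μ)

/-!
Discretise time along the dyadic grids of `[0, T]`: by right-continuity the running maximum is
the increasing limit of the grid maxima, so by monotone convergence and the layer-cake formula it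
suffices to bound `P(max over a grid > m)`. For `m < 1` bound it by `1`; for `m ≥ 1` apply Doob's
maximal inequality to the submartingale `(X - m/e)⁺` at level `m - m/e`.

For the second inequality exchange the integrals: for `x ≥ 0` and `b = 1 ∨ X₀`,
`∫_b^∞ (x - m/e)⁺/(m - m/e) dm ≤ (e/(e-1)) (x log x - x log b + b/e)`, and `E[X_T] ≥ X₀` absorbs
the term `-E[X_T] log b` because `X₀ log b = b log b`. What remains is the identity
`b + (e/(e-1)) (b/e - b log b) = (e/(e-1)) V(b)`.
-/

open Topology Real

def dyadicGrid (T : ℝ) (n k : ℕ) : ℝ := T * (min k (2 ^ n) : ℕ) / 2 ^ n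

def dyadicMax (f : ℝ → ℝ) (T : ℝ) (n : ℕ) : ℝ :=
  (Finset.range (2 ^ n + 1)).sup' Finset.nonempty_range_add_one fun k => f (dyadicGrid T n k)

section Dyadic

variable {T : ℝ}

theorem dyadicGrid_monotone (hT : 0 ≤ T) (n : ℕ) : Monotone (dyadicGrid T n) := by
  intro k l hkl
  unfold dyadicGrid
  gcongr

theorem dyadicGrid_two_pow (T : ℝ) (n : ℕ) : dyadicGrid T n (2 ^ n) = T := by
  simp [dyadicGrid]

theorem dyadicGrid_min (T : ℝ) (n k : ℕ) : dyadicGrid T n (min k (2 ^ n)) = dyadicGrid T n k := by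
  simp [dyadicGrid]

theorem dyadicGrid_succ_two_mul (T : ℝ) (n k : ℕ) :
    dyadicGrid T (n + 1) (2 * k) = dyadicGrid T n k := by
  simp only [dyadicGrid, pow_succ', Nat.mul_min_mul_left]
  push_cast
  field_simp

theorem le_dyadicGrid_ceil {s : ℝ} (hs : s ∈ Icc 0 T) (n : ℕ) :
    s ≤ dyadicGrid T n ⌈s * 2 ^ n / T⌉₊ := by
  rcases hs.1.trans hs.2 |>.eq_or_lt with hT | hT
  · obtain rfl : s = 0 := le_antisymm (hT ▸ hs.2) hs.1
    simp [dyadicGrid, ← hT]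
  unfold dyadicGrid
  rcases le_total ⌈s * 2 ^ n / T⌉₊ (2 ^ n) with hk | hk
  · have hle := Nat.le_ceil (s * 2 ^ n / T)
    rw [div_le_iff₀ hT] at hle
    rw [min_eq_left hk, le_div_iff₀ (by positivity)]
    linarith
  · rw [min_eq_right hk]
    push_cast
    field_simp
    exact hs.2

theorem dyadicGrid_ceil_le {s : ℝ} (hs : s ∈ Icc 0 T) (n : ℕ) :
    dyadicGrid T n ⌈s * 2 ^ n / T⌉₊ ≤ s + T * (1 / 2) ^ n := by
  rcases hs.1.trans hs.2 |>.eq_or_lt with hT | hT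
  · obtain rfl : s = 0 := le_antisymm (hT ▸ hs.2) hs.1
    simp [dyadicGrid, ← hT]
  have hceil : (⌈s * 2 ^ n / T⌉₊ : ℝ) < s * 2 ^ n / T + 1 :=
    Nat.ceil_lt_add_one (div_nonneg (mul_nonneg hs.1 (by positivity)) hT.le)
  calc dyadicGrid T n ⌈s * 2 ^ n / T⌉₊ ≤ T * (s * 2 ^ n / T + 1) / 2 ^ n := by
        unfold dyadicGrid
        gcongr
        exact (Nat.cast_le.2 (min_le_left _ _)).trans hceil.le
    _ = s + T * (1 / 2) ^ n := by rw [one_div_pow]; field_simp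

theorem tendsto_dyadicGrid_ceil {s : ℝ} (hs : s ∈ Icc 0 T) :
    Tendsto (fun n => dyadicGrid T n ⌈s * 2 ^ n / T⌉₊) atTop (𝓝[≥] s) := by
  have hlim : Tendsto (fun n : ℕ => s + T * (1 / 2) ^ n) atTop (𝓝 s) := by
    simpa using tendsto_const_nhds.add
      ((tendsto_pow_atTop_nhds_zero_of_lt_one (by norm_num : (0 : ℝ) ≤ 1 / 2)
        (by norm_num)).const_mul T)
  exact tendsto_nhdsWithin_iff.2
    ⟨tendsto_of_tendsto_of_tendsto_of_le_of_le tendsto_const_nhds hlim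
      (le_dyadicGrid_ceil hs) (dyadicGrid_ceil_le hs),
      Eventually.of_forall (le_dyadicGrid_ceil hs)⟩

theorem le_dyadicMax (f : ℝ → ℝ) (T : ℝ) (n k : ℕ) : f (dyadicGrid T n k) ≤ dyadicMax f T n := by
  rw [← dyadicGrid_min]
  exact Finset.le_sup' (fun k => f (dyadicGrid T n k))
    (Finset.mem_range_succ_iff.2 (min_le_right _ _))

theorem lt_dyadicMax_iff {f : ℝ → ℝ} {n : ℕ} {t : ℝ} :
    t < dyadicMax f T n ↔ ∃ k ≤ 2 ^ n, t < f (dyadicGrid T n k) := by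
  simp [dyadicMax, Finset.lt_sup'_iff]

theorem dyadicMax_mono (f : ℝ → ℝ) (T : ℝ) : Monotone (dyadicMax f T) := by
  refine monotone_nat_of_le_succ fun n => Finset.sup'_le _ _ fun k _ => ?_
  rw [← dyadicGrid_succ_two_mul]
  exact le_dyadicMax f T (n + 1) (2 * k)

theorem ofReal_runMax_le_iSup_dyadicMax {f : ℝ → ℝ}
    (hf : ∀ s, ContinuousWithinAt f (Ici s) s) :
    ENNReal.ofReal (runMax f T) ≤ ⨆ n, ENNReal.ofReal (dyadicMax f T n) := by
  set G := ⨆ n, ENNReal.ofReal (dyadicMax f T n)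
  have hfG : ∀ s ∈ Icc 0 T, ENNReal.ofReal (f s) ≤ G := fun s hs =>
    le_of_tendsto' ((ENNReal.continuous_ofReal.tendsto _).comp
        ((hf s).tendsto.comp (tendsto_dyadicGrid_ceil hs)))
      fun n => le_iSup_of_le n (ENNReal.ofReal_le_ofReal (le_dyadicMax f T n _))
  rcases eq_or_ne G ⊤ with hG | hG
  · exact hG ▸ le_top
  rw [ENNReal.ofReal_le_iff_le_toReal hG]
  refine Real.sSup_le ?_ ENNReal.toReal_nonneg
  rintro _ ⟨s, hs, rfl⟩
  exact (ENNReal.ofReal_le_iff_le_toReal hG).1 (hfG s hs)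

end Dyadic

theorem mul_log_sub_div_exp_le_mul_log {x b : ℝ} (hx : 0 ≤ x) (hb : 0 < b) :
    x * log b - b / exp 1 ≤ x * log x := by
  rcases hx.eq_or_lt with rfl | hx
  · simp only [zero_mul, zero_sub, neg_nonpos]
    positivity
  have hlog := log_le_sub_one_of_pos (by positivity : 0 < b / (exp 1 * x))
  rw [log_div hb.ne' (by positivity), log_mul (exp_pos 1).ne' hx.ne', log_exp] at hlog
  have hmul := mul_le_mul_of_nonneg_left hlog hx.le
  rw [show x * (b / (exp 1 * x) - 1) = b / exp 1 - x by field_simp] at hmul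
  linarith

theorem integral_const_mul_div_sub_one_div_exp {x b : ℝ} (hb : 0 < b) (hbx : b ≤ exp 1 * x) :
    ∫ m in b..exp 1 * x, exp 1 / (exp 1 - 1) * (x / m - 1 / exp 1)
      = exp 1 / (exp 1 - 1) * (x * log x - x * log b + b / exp 1) := by
  have hx : 0 < x := pos_of_mul_pos_right (hb.trans_le hbx) (exp_pos 1).le
  have h0 : (0 : ℝ) ∉ uIcc b (exp 1 * x) := by
    rw [uIcc_of_le hbx]; exact fun h => hb.not_ge h.1
  simp only [intervalIntegral.integral_const_mul, div_eq_mul_inv x]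
  rw [intervalIntegral.integral_sub, intervalIntegral.integral_const_mul, integral_inv h0,
    intervalIntegral.integral_const, log_div (by positivity) hb.ne', log_mul (exp_pos 1).ne' hx.ne',
    log_exp]
  · simp only [smul_eq_mul]; field_simp; ring
  · exact (intervalIntegral.intervalIntegrable_inv
      (fun m hm => (hb.trans_le ((uIcc_of_le hbx) ▸ hm).1).ne') continuousOn_id).const_mul x
  · exact intervalIntegrable_const

theorem mul_log_add_inv_exp_nonneg {x : ℝ} (hx : 0 ≤ x) : 0 ≤ x * log x + (exp 1)⁻¹ := by
  have := mul_log_sub_div_exp_le_mul_log hx one_pos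
  rw [log_one, mul_zero, zero_sub, one_div] at this
  linarith

theorem ofReal_div_mul_ofReal_sub_eq {x m : ℝ} (hm : 0 < m) :
    ENNReal.ofReal (1 / (m - m / exp 1)) * ENNReal.ofReal (x - m / exp 1)
      = ENNReal.ofReal (exp 1 / (exp 1 - 1) * (x / m - 1 / exp 1)) := by
  have he : 1 < exp 1 := one_lt_exp_iff.2 one_pos
  have hden : 0 < m - m / exp 1 := by
    rw [sub_pos, div_lt_iff₀ (by positivity)]; nlinarith
  rw [← ENNReal.ofReal_mul (one_div_pos.2 hden).le]
  congr 1
  field_simp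

theorem setLIntegral_Ioi_ofReal_div_mul_ofReal_sub_le {x b : ℝ} (hb : 0 < b) :
    ∫⁻ m in Ioi b, ENNReal.ofReal (1 / (m - m / exp 1)) * ENNReal.ofReal (x - m / exp 1)
      ≤ ENNReal.ofReal (exp 1 / (exp 1 - 1) * (x * log x - x * log b + b / exp 1)) := by
  set F : ℝ → ℝ := fun m => exp 1 / (exp 1 - 1) * (x / m - 1 / exp 1)
  have he : 1 < exp 1 := one_lt_exp_iff.2 one_pos
  have hF_nonpos : ∀ m, exp 1 * x ≤ m → 0 < m → ENNReal.ofReal (F m) = 0 := by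
    intro m hxm hm
    refine ENNReal.ofReal_eq_zero.2 (mul_nonpos_of_nonneg_of_nonpos (by bound) ?_)
    rw [sub_nonpos, div_le_div_iff₀ hm (by positivity)]
    linarith
  rw [setLIntegral_congr_fun measurableSet_Ioi fun m hm =>
    ofReal_div_mul_ofReal_sub_eq (hb.trans hm)]
  rcases le_or_gt (exp 1 * x) b with hxb | hbx
  · rw [setLIntegral_congr_fun measurableSet_Ioi fun m hm =>
      hF_nonpos m (hxb.trans hm.le) (hb.trans hm), lintegral_zero]
    exact zero_le
  have hF_cont : ContinuousOn F (Icc b (exp 1 * x)) :=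
    continuousOn_const.mul ((continuousOn_const.div continuousOn_id fun m hm =>
      (hb.trans_le hm.1).ne').sub continuousOn_const)
  have hF_nonneg : ∀ m ∈ Ioc b (exp 1 * x), 0 ≤ F m := by
    intro m hm
    have hm0 : 0 < m := hb.trans hm.1
    refine mul_nonneg (by bound) (sub_nonneg.2 ?_)
    rw [div_le_div_iff₀ (by positivity) hm0]
    linarith [hm.2]
  rw [← Ioc_union_Ioi_eq_Ioi hbx.le, lintegral_union measurableSet_Ioi (Ioc_disjoint_Ioi le_rfl),
    setLIntegral_congr_fun measurableSet_Ioi fun m hm =>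
      hF_nonpos m hm.le ((hb.trans hbx).trans hm), lintegral_zero, add_zero,
    ← ofReal_integral_eq_lintegral_ofReal
      (hF_cont.integrableOn_Icc.mono_set Ioc_subset_Icc_self)
      ((ae_restrict_iff' measurableSet_Ioc).2 (ae_of_all _ hF_nonneg)),
    ← intervalIntegral.integral_of_le hbx.le, integral_const_mul_div_sub_one_div_exp hb hbx.le]

theorem setLIntegral_Ioi_ite_lt_one (g : ℝ → ℝ≥0∞) (x₀ : ℝ) :
    ∫⁻ m in Ioi x₀, (if m < 1 then 1 else g m)
      = ENNReal.ofReal (max 1 x₀ - x₀) + ∫⁻ m in Ioi (max 1 x₀), g m := by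
  rw [← Ioc_union_Ioi_eq_Ioi (le_max_right 1 x₀),
    lintegral_union measurableSet_Ioi (Ioc_disjoint_Ioi le_rfl), ← setLIntegral_congr Ioo_ae_eq_Ioc,
    setLIntegral_congr_fun measurableSet_Ioo fun m hm =>
      if_pos ((lt_max_iff.1 hm.2).resolve_right hm.1.not_gt),
    setLIntegral_congr_fun measurableSet_Ioi fun m hm =>
      if_neg ((le_max_left 1 x₀).trans hm.le).not_gt,
    setLIntegral_one, Real.volume_Ioo]

theorem doobL1UB_eq {Ω : Type} [MeasurableSpace Ω] (μ : Measure Ω) (X : ℝ → Ω → ℝ) (T : ℝ)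
    {x₀ : ℝ} (hx₀ : 0 ≤ x₀) :
    doobL1UB μ X T x₀ = ENNReal.ofReal (max 1 x₀) + ∫⁻ m in Ioi (max 1 x₀),
      ENNReal.ofReal (1 / (m - m / exp 1)) * ∫⁻ ω, ENNReal.ofReal (X T ω - m / exp 1) ∂μ := by
  rw [doobL1UB, setLIntegral_Ioi_ite_lt_one, ← add_assoc,
    ← ENNReal.ofReal_add hx₀ (sub_nonneg.2 (le_max_right 1 x₀)), add_sub_cancel]

theorem ENNReal.add_ofReal_mul_ofReal_neg_le {a : ℝ≥0∞} {c u w : ℝ} (hc : 0 ≤ c) (hu : 0 ≤ u)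
    (ha : a ≠ 0) (h : a ≤ ENNReal.ofReal (c * (u + w))) :
    a + ENNReal.ofReal c * ENNReal.ofReal (-w)
      ≤ ENNReal.ofReal c * ENNReal.ofReal u + ENNReal.ofReal c * ENNReal.ofReal w := by
  have huw : 0 ≤ c * (u + w) := by
    by_contra! hneg
    exact ha (le_antisymm (h.trans_eq (ENNReal.ofReal_of_nonpos hneg.le)) zero_le)
  simp only [← ENNReal.ofReal_mul hc]
  rcases le_total 0 w with hw | hw
  · rw [ENNReal.ofReal_of_nonpos (by nlinarith), add_zero,
      ← ENNReal.ofReal_add (mul_nonneg hc hu) (mul_nonneg hc hw), ← mul_add]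
    exact h
  · rw [ENNReal.ofReal_of_nonpos (mul_nonpos_of_nonneg_of_nonpos hc hw), add_zero]
    calc a + ENNReal.ofReal (c * -w) ≤ ENNReal.ofReal (c * (u + w)) + ENNReal.ofReal (c * -w) :=
          add_le_add_left h _
      _ = ENNReal.ofReal (c * u) := by
          rw [← ENNReal.ofReal_add huw (by nlinarith)]
          ring_nf

namespace MeasureTheory

section TimeChange

variable {Ω ι κ : Type*} [m0 : MeasurableSpace Ω] [Preorder ι] [Preorder κ]

def Filtration.comp (ℱ : Filtration ι m0) {σ : κ → ι} (hσ : Monotone σ) : Filtration κ m0 :=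
  ⟨fun k => ℱ (σ k), fun _ _ hkl => ℱ.mono (hσ hkl), fun k => ℱ.le (σ k)⟩

theorem Submartingale.comp_monotone {μ : Measure Ω} {ℱ : Filtration ι m0} {X : ι → Ω → ℝ}
    (hX : Submartingale X ℱ μ) {σ : κ → ι} (hσ : Monotone σ) :
    Submartingale (fun k => X (σ k)) (ℱ.comp hσ) μ :=
  ⟨fun k => hX.stronglyAdapted (σ k), fun _ _ hkl => hX.2.1 _ _ (hσ hkl),
    fun k => hX.integrable (σ k)⟩

theorem Submartingale.ofReal_sub_mul_measure_exists_le
    {μ : Measure Ω} [IsFiniteMeasure μ] {ℱ : Filtration ι m0} {X : ι → Ω → ℝ}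
    (hX : Submartingale X ℱ μ) {σ : ℕ → ι} (hσ : Monotone σ) (N : ℕ) {a b : ℝ} (hab : a < b) :
    ENNReal.ofReal (b - a) * μ {ω | ∃ k ≤ N, b ≤ X (σ k) ω}
      ≤ ∫⁻ ω, ENNReal.ofReal (X (σ N) ω - a) ∂μ := by
  set Y : ℕ → Ω → ℝ := ((fun k => X (σ k)) - fun _ _ => a)⁺
  have hY : Submartingale Y (ℱ.comp hσ) μ :=
    ((hX.comp_monotone hσ).sub_martingale (martingale_const _ μ a)).pos
  have hY_apply : ∀ k ω, Y k ω = max (X (σ k) ω - a) 0 := fun _ _ => rfl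
  have hY0 : 0 ≤ᵐ[μ] Y N := ae_of_all _ fun ω => le_max_right _ _
  have hsub : {ω | ∃ k ≤ N, b ≤ X (σ k) ω} ⊆
      {ω | ((b - a).toNNReal : ℝ) ≤ (Finset.range (N + 1)).sup' Finset.nonempty_range_add_one
        fun k => Y k ω} := by
    rintro ω ⟨k, hkN, hk⟩
    refine le_trans ?_ (Finset.le_sup' (fun k => Y k ω) (Finset.mem_range_succ_iff.2 hkN))
    rw [hY_apply, Real.coe_toNNReal _ (sub_pos.2 hab).le]
    exact le_max_of_le_left (by linarith)
  calc ENNReal.ofReal (b - a) * μ {ω | ∃ k ≤ N, b ≤ X (σ k) ω}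
      ≤ (b - a).toNNReal * μ {ω | ((b - a).toNNReal : ℝ) ≤ (Finset.range (N + 1)).sup'
          Finset.nonempty_range_add_one fun k => Y k ω} := mul_le_mul_right (measure_mono hsub) _
    _ ≤ ENNReal.ofReal (∫ ω, Y N ω ∂μ) :=
        (maximal_ineq hY (fun k ω => le_max_right _ _) N).trans
          (ENNReal.ofReal_le_ofReal (setIntegral_le_integral (hY.integrable N) hY0))
    _ = ∫⁻ ω, ENNReal.ofReal (X (σ N) ω - a) ∂μ := by
        rw [ofReal_integral_eq_lintegral_ofReal (hY.integrable N) hY0]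
        simp only [hY_apply, ENNReal.ofReal_max, ENNReal.ofReal_zero, zero_le, max_eq_left]

end TimeChange

theorem lintegral_ofReal_le_add_setLIntegral_Ioi {Ω : Type*} [MeasurableSpace Ω]
    {μ : Measure Ω} [IsProbabilityMeasure μ] {Y : Ω → ℝ} (hY0 : 0 ≤ᵐ[μ] Y)
    (hY : AEMeasurable Y μ) {x₀ : ℝ} (hx₀ : 0 ≤ x₀) {g : ℝ → ℝ≥0∞}
    (hg : ∀ t ∈ Ioi x₀, μ {ω | t < Y ω} ≤ g t) :
    ∫⁻ ω, ENNReal.ofReal (Y ω) ∂μ ≤ ENNReal.ofReal x₀ + ∫⁻ t in Ioi x₀, g t := by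
  rw [lintegral_eq_lintegral_meas_lt μ hY0 hY, ← Ioc_union_Ioi_eq_Ioi hx₀,
    lintegral_union measurableSet_Ioi (Ioc_disjoint_Ioi le_rfl)]
  refine add_le_add ?_ (setLIntegral_mono' measurableSet_Ioi hg)
  calc ∫⁻ t in Ioc 0 x₀, μ {ω | t < Y ω} ≤ ∫⁻ _ in Ioc 0 x₀, 1 :=
        lintegral_mono fun _ => prob_le_one
    _ = ENNReal.ofReal x₀ := by rw [setLIntegral_one, Real.volume_Ioc, sub_zero]

theorem setLIntegral_Ioi_mul_lintegral_ofReal_sub_le {Ω : Type*} [MeasurableSpace Ω]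
    {μ : Measure Ω} [SFinite μ] {Y : Ω → ℝ} (hY : Measurable Y) {b : ℝ} (hb : 0 < b) :
    ∫⁻ m in Ioi b, ENNReal.ofReal (1 / (m - m / exp 1))
        * ∫⁻ ω, ENNReal.ofReal (Y ω - m / exp 1) ∂μ
      ≤ ∫⁻ ω, ENNReal.ofReal
          (exp 1 / (exp 1 - 1) * (Y ω * log (Y ω) - Y ω * log b + b / exp 1)) ∂μ := by
  simp only [← lintegral_const_mul _ (hY.sub_const _).ennreal_ofReal]
  rw [lintegral_lintegral_swap (by fun_prop)]
  exact lintegral_mono fun ω => setLIntegral_Ioi_ofReal_div_mul_ofReal_sub_le hb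

section RunningMax

variable {Ω : Type} [m0 : MeasurableSpace Ω] {μ : Measure Ω} {ℱ : Filtration ℝ m0}
  {X : ℝ → Ω → ℝ} {T : ℝ}

theorem Submartingale.measure_lt_dyadicMax_le [IsFiniteMeasure μ] (hX : Submartingale X ℱ μ)
    (hT : 0 ≤ T) (n : ℕ) {a m : ℝ} (ham : a < m) :
    μ {ω | m < dyadicMax (fun s => X s ω) T n}
      ≤ ENNReal.ofReal (1 / (m - a)) * ∫⁻ ω, ENNReal.ofReal (X T ω - a) ∂μ := by
  have hdoob := hX.ofReal_sub_mul_measure_exists_le (dyadicGrid_monotone hT n) (2 ^ n) ham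
  rw [dyadicGrid_two_pow] at hdoob
  calc μ {ω | m < dyadicMax (fun s => X s ω) T n}
      ≤ μ {ω | ∃ k ≤ 2 ^ n, m ≤ X (dyadicGrid T n k) ω} := measure_mono fun ω hω => by
        obtain ⟨k, hk, hlt⟩ := lt_dyadicMax_iff.1 hω
        exact ⟨k, hk, hlt.le⟩
    _ = ENNReal.ofReal (1 / (m - a))
          * (ENNReal.ofReal (m - a) * μ {ω | ∃ k ≤ 2 ^ n, m ≤ X (dyadicGrid T n k) ω}) := by
        rw [← mul_assoc, ← ENNReal.ofReal_mul (one_div_nonneg.2 (sub_pos.2 ham).le),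
          one_div_mul_cancel (sub_pos.2 ham).ne', ENNReal.ofReal_one, one_mul]
    _ ≤ _ := by gcongr

theorem Submartingale.lintegral_runMax_le_doobL1UB [IsProbabilityMeasure μ]
    (hX : Submartingale X ℱ μ) (hT : 0 ≤ T) {x₀ : ℝ} (hx₀ : 0 ≤ x₀)
    (hright : ∀ ω s, ContinuousWithinAt (fun s => X s ω) (Ici s) s)
    (hnonneg : ∀ s ω, 0 ≤ X s ω) :
    ∫⁻ ω, ENNReal.ofReal (runMax (fun s => X s ω) T) ∂μ ≤ doobL1UB μ X T x₀ := by
  set M : ℕ → Ω → ℝ := fun n ω => dyadicMax (fun s => X s ω) T n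
  have hM : ∀ n, Measurable (M n) := fun n =>
    Finset.measurable_range_sup'' fun k _ =>
      ((hX.stronglyAdapted _).mono (ℱ.le _)).measurable
  have hM0 : ∀ n ω, 0 ≤ M n ω := fun n ω => (hnonneg _ ω).trans (le_dyadicMax (X · ω) T n 0)
  calc ∫⁻ ω, ENNReal.ofReal (runMax (fun s => X s ω) T) ∂μ
      ≤ ∫⁻ ω, ⨆ n, ENNReal.ofReal (M n ω) ∂μ :=
        lintegral_mono fun ω => ofReal_runMax_le_iSup_dyadicMax (hright ω)
    _ = ⨆ n, ∫⁻ ω, ENNReal.ofReal (M n ω) ∂μ :=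
        lintegral_iSup (fun n => (hM n).ennreal_ofReal)
          fun _ _ hnl ω => ENNReal.ofReal_le_ofReal (dyadicMax_mono _ T hnl)
    _ ≤ doobL1UB μ X T x₀ := by
        refine iSup_le fun n => lintegral_ofReal_le_add_setLIntegral_Ioi
          (ae_of_all _ (hM0 n)) (hM n).aemeasurable hx₀ fun t _ => ?_
        split_ifs with ht
        · exact prob_le_one
        · refine hX.measure_lt_dyadicMax_le hT n ?_
          have : 1 < exp 1 := one_lt_exp_iff.2 one_pos
          rw [div_lt_iff₀ (by positivity)]
          nlinarith

theorem Submartingale.le_integral_of_ae_eq_const [IsProbabilityMeasure μ]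
    (hX : Submartingale X ℱ μ) (hT : 0 ≤ T) {x₀ : ℝ} (hinit : ∀ᵐ ω ∂μ, X 0 ω = x₀) :
    x₀ ≤ ∫ ω, X T ω ∂μ := by
  calc x₀ = ∫ ω, X 0 ω ∂μ := by simp [integral_congr_ae hinit]
    _ ≤ ∫ ω, X T ω ∂μ := by simpa using hX.setIntegral_le hT MeasurableSet.univ

theorem Submartingale.doobL1UB_le_ofReal [IsProbabilityMeasure μ] (hX : Submartingale X ℱ μ)
    (hT : 0 ≤ T) {x₀ : ℝ} (hx₀ : 0 ≤ x₀) (hinit : ∀ᵐ ω ∂μ, X 0 ω = x₀)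
    (hnonneg : ∀ ω, 0 ≤ X T ω) (hlog : Integrable (fun ω => X T ω * log (X T ω)) μ) :
    doobL1UB μ X T x₀ ≤ ENNReal.ofReal
      (exp 1 / (exp 1 - 1) * (∫ ω, X T ω * log (X T ω) ∂μ + Vfun (max 1 x₀))) := by
  set b := max 1 x₀
  set c := exp 1 / (exp 1 - 1)
  have hb : 0 < b := one_pos.trans_le (le_max_left 1 x₀)
  have hc : 0 ≤ c := div_nonneg (exp_pos 1).le (sub_nonneg.2 (one_le_exp zero_le_one))
  have hXT : Measurable (X T) := ((hX.stronglyAdapted T).mono (ℱ.le T)).measurable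
  have hG_int : Integrable
      (fun ω => c * (X T ω * log (X T ω) - X T ω * log b + b / exp 1)) μ :=
    ((hlog.sub ((hX.integrable T).mul_const _)).add (integrable_const _)).const_mul c
  have hG_nonneg : ∀ ω, 0 ≤ c * (X T ω * log (X T ω) - X T ω * log b + b / exp 1) := fun ω =>
    mul_nonneg hc (by linarith [mul_log_sub_div_exp_le_mul_log (hnonneg ω) hb])
  have hlogb : x₀ * log b = b * log b := by
    rcases le_total x₀ 1 with h | h
    · simp [b, max_eq_left h]
    · simp [b, max_eq_right h]
  rw [doobL1UB_eq μ X T hx₀]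
  calc ENNReal.ofReal b + ∫⁻ m in Ioi b, ENNReal.ofReal (1 / (m - m / exp 1))
        * ∫⁻ ω, ENNReal.ofReal (X T ω - m / exp 1) ∂μ
      ≤ ENNReal.ofReal b + ∫⁻ ω,
          ENNReal.ofReal (c * (X T ω * log (X T ω) - X T ω * log b + b / exp 1)) ∂μ :=
        add_le_add_right (setLIntegral_Ioi_mul_lintegral_ofReal_sub_le hXT hb) _
    _ = ENNReal.ofReal (b + c * (∫ ω, X T ω * log (X T ω) ∂μ - (∫ ω, X T ω ∂μ) * log b
          + b / exp 1)) := by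
        rw [← ofReal_integral_eq_lintegral_ofReal hG_int (ae_of_all _ hG_nonneg),
          ← ENNReal.ofReal_add hb.le (integral_nonneg hG_nonneg), integral_const_mul,
          integral_add ?_ (integrable_const _), integral_sub hlog ((hX.integrable T).mul_const _),
          integral_mul_const, integral_const, probReal_univ, one_smul]
        exact hlog.sub ((hX.integrable T).mul_const _)
    _ ≤ ENNReal.ofReal (b + c * (∫ ω, X T ω * log (X T ω) ∂μ - x₀ * log b + b / exp 1)) := by
        gcongr
        exacts [log_nonneg (le_max_left 1 x₀), hX.le_integral_of_ae_eq_const hT hinit]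
    _ = ENNReal.ofReal (c * (∫ ω, X T ω * log (X T ω) ∂μ + Vfun b)) := by
        have hc1 : c - c / exp 1 = 1 := by
          have : exp 1 - 1 ≠ 0 := (sub_pos.2 (one_lt_exp_iff.2 one_pos)).ne'
          simp only [c]
          field_simp
        rw [hlogb, Vfun]
        congr 1
        linear_combination (-b) * hc1

end RunningMax

end MeasureTheory

/-- The second inequality is stated in `[0,∞]` through
`E[X_T log X_T] = E[X_T log X_T + 1/e] - 1/e`, whose integrand is nonnegative. -/
theorem doob_L1_inequality
    {Ω : Type} [m0 : MeasurableSpace Ω] (μ : Measure Ω) [IsProbabilityMeasure μ]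
    (T : ℝ) (hT : 0 ≤ T) (x₀ : ℝ) (hx₀ : 0 ≤ x₀)
    (ℱ : Filtration ℝ m0) (X : ℝ → Ω → ℝ)
    (hX : Submartingale X ℱ μ)
    (hcadlag : ∀ ω, IsCadlag fun s => X s ω)
    (hnonneg : ∀ s ω, 0 ≤ X s ω)
    (hinit : ∀ᵐ ω ∂μ, X 0 ω = x₀) :
    (∫⁻ ω, ENNReal.ofReal (runMax (fun s => X s ω) T) ∂μ) ≤ doobL1UB μ X T x₀ ∧
    doobL1UB μ X T x₀
        + ENNReal.ofReal (Real.exp 1 / (Real.exp 1 - 1))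
            * ENNReal.ofReal ((Real.exp 1)⁻¹ - Vfun (max 1 x₀))
      ≤ ENNReal.ofReal (Real.exp 1 / (Real.exp 1 - 1))
            * (∫⁻ ω, ENNReal.ofReal (X T ω * Real.log (X T ω) + (Real.exp 1)⁻¹) ∂μ)
        + ENNReal.ofReal (Real.exp 1 / (Real.exp 1 - 1))
            * ENNReal.ofReal (Vfun (max 1 x₀) - (Real.exp 1)⁻¹) := by
  refine ⟨hX.lintegral_runMax_le_doobL1UB hT hx₀ (fun ω => (hcadlag ω).1) hnonneg, ?_⟩
  have hc : 0 < exp 1 / (exp 1 - 1) :=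
    div_pos (exp_pos 1) (sub_pos.2 (one_lt_exp_iff.2 one_pos))
  have hent0 : ∀ ω, 0 ≤ X T ω * log (X T ω) + (exp 1)⁻¹ := fun ω =>
    mul_log_add_inv_exp_nonneg (hnonneg T ω)
  by_cases hent : ∫⁻ ω, ENNReal.ofReal (X T ω * log (X T ω) + (exp 1)⁻¹) ∂μ = ⊤
  · rw [hent, ENNReal.mul_top (ENNReal.ofReal_pos.2 hc).ne', top_add]
    exact le_top
  have hXT : Measurable (X T) := ((hX.stronglyAdapted T).mono (ℱ.le T)).measurable
  have hint : Integrable (fun ω => X T ω * log (X T ω) + (exp 1)⁻¹) μ :=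
    (lintegral_ofReal_ne_top_iff_integrable (by fun_prop) (ae_of_all _ hent0)).1 hent
  have hUB : doobL1UB μ X T x₀ ≠ 0 := by
    rw [doobL1UB_eq μ X T hx₀]
    exact ((ENNReal.ofReal_pos.2 (one_pos.trans_le (le_max_left 1 x₀))).trans_le le_self_add).ne'
  have hlog : Integrable (fun ω => X T ω * log (X T ω)) μ := integrable_add_const_iff.1 hint
  rw [← ofReal_integral_eq_lintegral_ofReal hint (ae_of_all _ hent0), ← neg_sub (Vfun (max 1 x₀))]
  refine ENNReal.add_ofReal_mul_ofReal_neg_le hc.le (integral_nonneg hent0) hUB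
    ((hX.doobL1UB_le_ofReal hT hx₀ hinit (hnonneg T) hlog).trans_eq ?_)
  rw [integral_add hlog (integrable_const _), integral_const, probReal_univ, one_smul]
  ring_nf
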